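/- Let X₁, X₂ be real Banach spaces and X = X₁ × X₂ with norm ‖(x,y)‖ = (‖x‖² + ‖y‖²)^{1/2}. Let A₁ : X₁ → X₁ and A₂ : X₂ → X₂ be bounded linear operators with ‖exp(−sA_j)‖ ≤ 1 for all s ≥ 0 (j = 1,2), and let B₁ : X₂ → X₁, B₂ : X₁ → X₂ be bounded linear operators. Define E_j(τ) = exp(−τA_j), X_j(τ) = (∫₀^τ exp(−σA_j) dσ) ∘ B_j, the split-step operators T₁(τ)(x,y) = (E₁(τ)x + X₁(τ)y, y), T₂(τ)(x,y) = (x, X₂(τ)x + E₂(τ)y), and T(τ) = T₂(τ) ∘ T₁(τ). Then for all t ≥ 0 and all n ∈ ℕ with n ≥ 1, the n-th power satisfies the stability estimate ‖T(t/n)^n‖ ≤ exp(t(‖B₁‖ + ‖B₂‖)). -/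

import Mathlib

noncomputable section

open scoped Topology

variable {X₁ X₂ : Type*} [NormedAddCommGroup X₁] [NormedSpace ℝ X₁] [CompleteSpace X₁]
  [NormedAddCommGroup X₂] [NormedSpace ℝ X₂] [CompleteSpace X₂]

/-- The operator exponential `exp (-τ A)` of a bounded operator `A`. -/
def expOp {X : Type*} [NormedAddCommGroup X] [NormedSpace ℝ X] [CompleteSpace X]
    (A : X →L[ℝ] X) (τ : ℝ) : X →L[ℝ] X :=
  NormedSpace.exp (-(τ • A))

/-- The coupling operator `X(τ) = (∫₀^τ exp(-σ A) dσ) ∘ B`. -/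
def Xop {X Y : Type*} [NormedAddCommGroup X] [NormedSpace ℝ X] [CompleteSpace X]
    [NormedAddCommGroup Y] [NormedSpace ℝ Y] (A : X →L[ℝ] X) (B : Y →L[ℝ] X) (τ : ℝ) :
    Y →L[ℝ] X :=
  (∫ σ in (0:ℝ)..τ, expOp A σ).comp B

/-- Lift of a block operator on `X₁ × X₂` to the `ℓ²`-product space
`X = X₁ × X₂` with norm `‖(x,y)‖ = (‖x‖² + ‖y‖²)^(1/2)`. -/
def toL2 (M : (X₁ × X₂) →L[ℝ] (X₁ × X₂)) :
    WithLp 2 (X₁ × X₂) →L[ℝ] WithLp 2 (X₁ × X₂) :=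
  ((WithLp.prodContinuousLinearEquiv 2 ℝ X₁ X₂).symm.toContinuousLinearMap.comp M).comp
    (WithLp.prodContinuousLinearEquiv 2 ℝ X₁ X₂).toContinuousLinearMap

/-- The split-step operator `T₁(τ)(x,y) = (exp(-τA₁)x + X₁(τ)y, y)`. -/
def T1 (A₁ : X₁ →L[ℝ] X₁) (B₁ : X₂ →L[ℝ] X₁) (τ : ℝ) :
    WithLp 2 (X₁ × X₂) →L[ℝ] WithLp 2 (X₁ × X₂) :=
  toL2 (((expOp A₁ τ).coprod (Xop A₁ B₁ τ)).prod (ContinuousLinearMap.snd ℝ X₁ X₂))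

/-- The split-step operator `T₂(τ)(x,y) = (x, X₂(τ)x + exp(-τA₂)y)`. -/
def T2 (A₂ : X₂ →L[ℝ] X₂) (B₂ : X₁ →L[ℝ] X₂) (τ : ℝ) :
    WithLp 2 (X₁ × X₂) →L[ℝ] WithLp 2 (X₁ × X₂) :=
  toL2 ((ContinuousLinearMap.fst ℝ X₁ X₂).prod ((Xop A₂ B₂ τ).coprod (expOp A₂ τ)))

/-- The split-step approximation operator `T(τ) = T₂(τ) ∘ T₁(τ)`. -/
def Tfull (A₁ : X₁ →L[ℝ] X₁) (A₂ : X₂ →L[ℝ] X₂) (B₁ : X₂ →L[ℝ] X₁) (B₂ : X₁ →L[ℝ] X₂)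
    (τ : ℝ) : WithLp 2 (X₁ × X₂) →L[ℝ] WithLp 2 (X₁ × X₂) :=
  (T2 A₂ B₂ τ).comp (T1 A₁ B₁ τ)

/-- The full operator `𝓒(x,y) = (A₁x - B₁y, A₂y - B₂x)`. -/
def opC (A₁ : X₁ →L[ℝ] X₁) (A₂ : X₂ →L[ℝ] X₂) (B₁ : X₂ →L[ℝ] X₁) (B₂ : X₁ →L[ℝ] X₂) :
    WithLp 2 (X₁ × X₂) →L[ℝ] WithLp 2 (X₁ × X₂) :=
  toL2 ((A₁.coprod (-B₁)).prod ((-B₂).coprod A₂))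

/-- The diagonal operator `𝓐(x,y) = (A₁x, A₂y)`. -/
def opA (A₁ : X₁ →L[ℝ] X₁) (A₂ : X₂ →L[ℝ] X₂) :
    WithLp 2 (X₁ × X₂) →L[ℝ] WithLp 2 (X₁ × X₂) :=
  toL2 (A₁.prodMap A₂)

/-- The off-diagonal coupling operator `𝓑(x,y) = (B₁y, B₂x)`. -/
def opB (B₁ : X₂ →L[ℝ] X₁) (B₂ : X₁ →L[ℝ] X₂) :
    WithLp 2 (X₁ × X₂) →L[ℝ] WithLp 2 (X₁ × X₂) :=
  toL2 (((0 : X₁ →L[ℝ] X₁).coprod B₁).prod (B₂.coprod (0 : X₂ →L[ℝ] X₂)))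

/- A split step is a perturbation of the contraction `diag(exp(-τA₁), 1)`
(resp. `diag(1, exp(-τA₂))`) by an off-diagonal block of norm at most `τ‖B_j‖`, so its norm is
at most `1 + τ‖B_j‖ ≤ exp(τ‖B_j‖)`. Hence `‖T(τ)‖ ≤ exp(τ(‖B₁‖ + ‖B₂‖))`, and
submultiplicativity of the operator norm gives the bound for `T(t/n)ⁿ`. -/

lemma sq_add_sq_le_one_add_sq_mul {a b c u v : ℝ} (hc : 0 ≤ c) (hu : 0 ≤ u) (hv : 0 ≤ v)
    (hua : u ≤ a + c * b) (hvb : v ≤ c * a + b) :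
    u ^ 2 + v ^ 2 ≤ (1 + c) ^ 2 * (a ^ 2 + b ^ 2) := by
  have hu2 : u ^ 2 ≤ (a + c * b) ^ 2 := pow_le_pow_left₀ hu hua 2
  have hv2 : v ^ 2 ≤ (c * a + b) ^ 2 := pow_le_pow_left₀ hv hvb 2
  nlinarith [mul_nonneg hc (sq_nonneg (a - b))]

lemma WithLp.prod_opNorm_le_one_add {E F : Type*} [NormedAddCommGroup E] [NormedSpace ℝ E]
    [NormedAddCommGroup F] [NormedSpace ℝ F] (M : WithLp 2 (E × F) →L[ℝ] WithLp 2 (E × F))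
    {c : ℝ} (hc : 0 ≤ c) (hfst : ∀ z, ‖(M z).fst‖ ≤ ‖z.fst‖ + c * ‖z.snd‖)
    (hsnd : ∀ z, ‖(M z).snd‖ ≤ c * ‖z.fst‖ + ‖z.snd‖) : ‖M‖ ≤ 1 + c := by
  refine M.opNorm_le_bound (by linarith) fun z ↦ ?_
  refine le_of_pow_le_pow_left₀ two_ne_zero (by positivity) ?_
  rw [mul_pow, WithLp.prod_norm_sq_eq_of_L2, WithLp.prod_norm_sq_eq_of_L2 z]
  exact sq_add_sq_le_one_add_sq_mul hc (norm_nonneg _) (norm_nonneg _) (hfst z) (hsnd z)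

lemma norm_Xop_le {X Y : Type*} [NormedAddCommGroup X] [NormedSpace ℝ X] [CompleteSpace X]
    [NormedAddCommGroup Y] [NormedSpace ℝ Y] {A : X →L[ℝ] X} (B : Y →L[ℝ] X) {τ : ℝ}
    (hτ : 0 ≤ τ) (hA : ∀ s : ℝ, 0 ≤ s → ‖expOp A s‖ ≤ 1) : ‖Xop A B τ‖ ≤ τ * ‖B‖ := by
  have hint : ‖∫ σ in (0:ℝ)..τ, expOp A σ‖ ≤ 1 * |τ - 0| :=
    intervalIntegral.norm_integral_le_of_norm_le_const fun s hs ↦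
      hA s (Set.uIoc_of_le hτ ▸ hs).1.le
  rw [one_mul, sub_zero, abs_of_nonneg hτ] at hint
  exact (ContinuousLinearMap.opNorm_comp_le _ _).trans (by gcongr)

lemma norm_T1_le {A₁ : X₁ →L[ℝ] X₁} (B₁ : X₂ →L[ℝ] X₁) {τ : ℝ} (hτ : 0 ≤ τ)
    (hA₁ : ∀ s : ℝ, 0 ≤ s → ‖expOp A₁ s‖ ≤ 1) : ‖T1 A₁ B₁ τ‖ ≤ 1 + τ * ‖B₁‖ := by
  have hc : 0 ≤ τ * ‖B₁‖ := by positivity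
  refine WithLp.prod_opNorm_le_one_add _ hc (fun z ↦ ?_) fun z ↦ ?_
  · calc ‖expOp A₁ τ z.fst + Xop A₁ B₁ τ z.snd‖
          ≤ ‖expOp A₁ τ z.fst‖ + ‖Xop A₁ B₁ τ z.snd‖ := norm_add_le _ _
      _ ≤ 1 * ‖z.fst‖ + τ * ‖B₁‖ * ‖z.snd‖ := by
          gcongr
          · exact (expOp A₁ τ).le_of_opNorm_le (hA₁ τ hτ) _
          · exact (Xop A₁ B₁ τ).le_of_opNorm_le (norm_Xop_le B₁ hτ hA₁) _
      _ = ‖z.fst‖ + τ * ‖B₁‖ * ‖z.snd‖ := by rw [one_mul]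
  · exact le_add_of_nonneg_left (by positivity)

lemma norm_T2_le {A₂ : X₂ →L[ℝ] X₂} (B₂ : X₁ →L[ℝ] X₂) {τ : ℝ} (hτ : 0 ≤ τ)
    (hA₂ : ∀ s : ℝ, 0 ≤ s → ‖expOp A₂ s‖ ≤ 1) : ‖T2 A₂ B₂ τ‖ ≤ 1 + τ * ‖B₂‖ := by
  have hc : 0 ≤ τ * ‖B₂‖ := by positivity
  refine WithLp.prod_opNorm_le_one_add _ hc (fun z ↦ ?_) fun z ↦ ?_
  · exact le_add_of_nonneg_right (by positivity)
  · calc ‖Xop A₂ B₂ τ z.fst + expOp A₂ τ z.snd‖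
          ≤ ‖Xop A₂ B₂ τ z.fst‖ + ‖expOp A₂ τ z.snd‖ := norm_add_le _ _
      _ ≤ τ * ‖B₂‖ * ‖z.fst‖ + 1 * ‖z.snd‖ := by
          gcongr
          · exact (Xop A₂ B₂ τ).le_of_opNorm_le (norm_Xop_le B₂ hτ hA₂) _
          · exact (expOp A₂ τ).le_of_opNorm_le (hA₂ τ hτ) _
      _ = τ * ‖B₂‖ * ‖z.fst‖ + ‖z.snd‖ := by rw [one_mul]

lemma norm_Tfull_le {A₁ : X₁ →L[ℝ] X₁} {A₂ : X₂ →L[ℝ] X₂} (B₁ : X₂ →L[ℝ] X₁)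
    (B₂ : X₁ →L[ℝ] X₂) {τ : ℝ} (hτ : 0 ≤ τ) (hA₁ : ∀ s : ℝ, 0 ≤ s → ‖expOp A₁ s‖ ≤ 1)
    (hA₂ : ∀ s : ℝ, 0 ≤ s → ‖expOp A₂ s‖ ≤ 1) :
    ‖Tfull A₁ A₂ B₁ B₂ τ‖ ≤ Real.exp (τ * (‖B₁‖ + ‖B₂‖)) :=
  calc ‖Tfull A₁ A₂ B₁ B₂ τ‖ ≤ ‖T2 A₂ B₂ τ‖ * ‖T1 A₁ B₁ τ‖ :=
        ContinuousLinearMap.opNorm_comp_le _ _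
    _ ≤ Real.exp (τ * ‖B₂‖) * Real.exp (τ * ‖B₁‖) := by
        gcongr
        · exact (norm_T2_le B₂ hτ hA₂).trans (by linarith [Real.add_one_le_exp (τ * ‖B₂‖)])
        · exact (norm_T1_le B₁ hτ hA₁).trans (by linarith [Real.add_one_le_exp (τ * ‖B₁‖)])
    _ = Real.exp (τ * (‖B₁‖ + ‖B₂‖)) := by rw [← Real.exp_add]; ring_nf

/-- Stability of the split-step approximation: `‖T(t/n)ⁿ‖ ≤ exp(t(‖B₁‖ + ‖B₂‖))`. -/
theorem Tfull_pow_norm_le (A₁ : X₁ →L[ℝ] X₁) (A₂ : X₂ →L[ℝ] X₂)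
    (B₁ : X₂ →L[ℝ] X₁) (B₂ : X₁ →L[ℝ] X₂)
    (hA₁ : ∀ s : ℝ, 0 ≤ s → ‖expOp A₁ s‖ ≤ 1)
    (hA₂ : ∀ s : ℝ, 0 ≤ s → ‖expOp A₂ s‖ ≤ 1) :
    ∀ t : ℝ, 0 ≤ t → ∀ n : ℕ, 1 ≤ n →
      ‖(Tfull A₁ A₂ B₁ B₂ (t / n)) ^ n‖ ≤ Real.exp (t * (‖B₁‖ + ‖B₂‖)) := by
  intro t ht n hn
  have hτ : 0 ≤ t / n := by positivity
  calc ‖(Tfull A₁ A₂ B₁ B₂ (t / n)) ^ n‖ ≤ ‖Tfull A₁ A₂ B₁ B₂ (t / n)‖ ^ n := norm_pow_le' _ hn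
    _ ≤ Real.exp (t / n * (‖B₁‖ + ‖B₂‖)) ^ n := by gcongr; exact norm_Tfull_le B₁ B₂ hτ hA₁ hA₂
    _ = Real.exp (t * (‖B₁‖ + ‖B₂‖)) := by rw [← Real.exp_nat_mul]; field_simp
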